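/- Let H be a graph with a total vertex ordering, let F₁, …, Fₙ be its parallel parts and S₁, …, Sₙ the respective sets of sources adjacent to each part. Suppose H is such that every source is adjacent to at least one part (e.g., H has no isolated sources), and let h₁, …, hₙ be copies of H in a graph G such that the images h_i(F_i) are pairwise compatible, i.e., for every source s adjacent to both F_i and F_j we have h_i(s) = h_j(s). Then the union over i of h_i restricted to F_i ∪ S_i defines a copy of H in G. -/

import Mathlib

/-! Every edge of `H` has an inner endpoint `b`, since two adjacent vertices cannot both be
sources. The copy `c b` maps that edge to an edge of `G`, and the glued map agrees with `c b`
at both endpoints: at an inner neighbour because the copies are constant on parallel parts,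
at a source neighbour because copies of parts adjacent to a common source agree on it. -/

open SimpleGraph

variable {α β : Type*}

/-- A copy of `H` in `G`: an injective map sending edges to edges. -/
def IsCopy (H : SimpleGraph α) (G : SimpleGraph β) (f : α → β) : Prop :=
  Function.Injective f ∧ ∀ a b, H.Adj a b → G.Adj (f a) (f b)

/-- With respect to a linear order on the vertices, a vertex is a *source* if no
neighbor strictly precedes it; otherwise it is an *inner* vertex. -/
def IsSource [LinearOrder α] (H : SimpleGraph α) (v : α) : Prop :=
  ∀ u, H.Adj u v → ¬ u < v

/-- The subgraph of `H` induced by a vertex set `s`, viewed as a graph on the same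
vertex type. Parallel parts of `H` are the connected components of
`restrictTo H {inner vertices}`. -/
def restrictTo (H : SimpleGraph α) (s : Set α) : SimpleGraph α where
  Adj a b := H.Adj a b ∧ a ∈ s ∧ b ∈ s
  symm := ⟨fun a b ⟨h, ha, hb⟩ => ⟨h.symm, hb, ha⟩⟩
  loopless := ⟨fun a ⟨h, _, _⟩ => H.loopless.irrefl a h⟩

section Gluing

variable [LinearOrder α] {H : SimpleGraph α}

theorem IsSource.not_isSource_of_adj {a b : α} (ha : IsSource H a) (hab : H.Adj a b) :
    ¬ IsSource H b := fun hb =>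
  (lt_or_gt_of_ne hab.ne).elim (hb a hab) (ha b hab.symm)

theorem apply_self_eq_of_adj_of_not_isSource (c : α → α → β)
    (hpart : ∀ v w, ¬ IsSource H v → ¬ IsSource H w →
      (restrictTo H {x | ¬ IsSource H x}).Reachable v w → c v = c w)
    (hcompat : ∀ s v w, IsSource H s → ¬ IsSource H v → ¬ IsSource H w →
      H.Adj s v → H.Adj s w → c v s = c w s)
    (hsrc : ∀ s, IsSource H s → ∃ v, ¬ IsSource H v ∧ H.Adj s v ∧ c s = c v)
    {a b : α} (hab : H.Adj a b) (hb : ¬ IsSource H b) : c a a = c b a := by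
  by_cases ha : IsSource H a
  · obtain ⟨v, hv, hav, hcv⟩ := hsrc a ha
    rw [hcv]
    exact hcompat a v b ha hv hb hav hab
  · exact congrFun (hpart a b ha hb (Adj.reachable ⟨hab, ha, hb⟩)) a

end Gluing

/-- Choose, for each vertex `v` of `H`, a copy `c v` of `H` in `G`, so
that the choice is constant on each parallel part, the copy chosen at a source is the
copy chosen at some adjacent part, the copies of the parts are pairwise compatible
(copies of two parts adjacent to a common source agree on that source), and any two of
the chosen copies agree on the `H`-vertex assigned to each shared vertex of `G`
(well-definedness). Then `v ↦ (c v) v` is a copy of `H` in `G`. -/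
theorem stmt8 [LinearOrder α] (H : SimpleGraph α) (G : SimpleGraph β)
    (c : α → α → β)
    (hcopy : ∀ v, IsCopy H G (c v))
    (hpart : ∀ v w, ¬ IsSource H v → ¬ IsSource H w →
      (restrictTo H {x | ¬ IsSource H x}).Reachable v w → c v = c w)
    (hcompat : ∀ s v w, IsSource H s → ¬ IsSource H v → ¬ IsSource H w →
      H.Adj s v → H.Adj s w → c v s = c w s)
    (hsrc : ∀ s, IsSource H s → ∃ v, ¬ IsSource H v ∧ H.Adj s v ∧ c s = c v)
    (hunif : ∀ v w a b, c v a = c w b → a = b) :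
    IsCopy H G (fun v => c v v) := by
  have agree {a b : α} (hab : H.Adj a b) (hb : ¬ IsSource H b) : c a a = c b a :=
    apply_self_eq_of_adj_of_not_isSource c hpart hcompat hsrc hab hb
  refine ⟨fun v w h => hunif v w v w h, fun a b hab => ?_⟩
  show G.Adj (c a a) (c b b)
  by_cases hb : IsSource H b
  · rw [agree hab.symm (hb.not_isSource_of_adj hab.symm)]
    exact (hcopy a).2 a b hab
  · rw [agree hab hb]
    exact (hcopy b).2 a b hab
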